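/- arXiv:1904.05551 — 10 statements merged into one kernel-verified Lean document; each statement's English description precedes it below -/
import Mathlib

section
/- Let m and F be integers with (m,F) ≠ (1,-1). There exists a numerical semigroup with multiplicity m and Frobenius number F if and only if F ≥ m-1 ≥ 1 and m does not divide F. -/
/-- A numerical semigroup: a cofinite submonoid of (ℕ, +). -/
def IsNumericalSemigroup (S : Set ℕ) : Prop :=
  0 ∈ S ∧ (∀ a ∈ S, ∀ b ∈ S, a + b ∈ S) ∧ Sᶜ.Finite

/-- `m` is the multiplicity of `S`: its least positive element. -/
def HasMultiplicity (S : Set ℕ) (m : ℕ) : Prop :=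
  m ∈ S ∧ 0 < m ∧ ∀ s ∈ S, 0 < s → m ≤ s

/-- `F` is the Frobenius number of `S`: the largest non-element. -/
def HasFrobenius (S : Set ℕ) (F : ℕ) : Prop :=
  F ∉ S ∧ ∀ x : ℕ, F < x → x ∈ S

/-- `S` is an irreducible numerical semigroup: it is not the intersection of
two numerical semigroups properly containing it. -/
def IsIrreducibleNS (S : Set ℕ) : Prop :=
  IsNumericalSemigroup S ∧
    ¬ ∃ S₁ S₂ : Set ℕ, IsNumericalSemigroup S₁ ∧ IsNumericalSemigroup S₂ ∧
      S ⊂ S₁ ∧ S ⊂ S₂ ∧ S = S₁ ∩ S₂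

/--  is the multiplicity of  viewed inside ℤ. -/
def HasMultiplicityZ (S : Set ℕ) (m : ℤ) : Prop :=
  m ∈ (Nat.cast '' S : Set ℤ) ∧ 0 < m ∧ ∀ y ∈ (Nat.cast '' S : Set ℤ), 0 < y → m ≤ y

/--  is the Frobenius number of : the largest integer not in . -/
def HasFrobeniusZ (S : Set ℕ) (F : ℤ) : Prop :=
  F ∉ (Nat.cast '' S : Set ℤ) ∧ ∀ y : ℤ, y ∉ (Nat.cast '' S : Set ℤ) → y ≤ F

/-! A semigroup of multiplicity `m` contains all multiples of `m`, so `m ∤ F`, and it contains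
no integer strictly between `0` and `m`, so `m - 1 ≤ F`; multiplicity `1` forces `S = ℕ`, whose
Frobenius number is `-1`. Conversely, for `2 ≤ m ≤ F + 1` with `m ∤ F` the set
`mℕ ∪ {F + 1, F + 2, …}` has multiplicity `m` and Frobenius number `F`. -/

namespace IsNumericalSemigroup

variable {S : Set ℕ}

theorem mul_mem (hS : IsNumericalSemigroup S) {a : ℕ} (ha : a ∈ S) (k : ℕ) : k * a ∈ S := by
  induction k with
  | zero => simpa using hS.1
  | succ k ih => simpa [add_mul] using hS.2.1 _ ih _ ha

end IsNumericalSemigroup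

namespace HasMultiplicity

variable {S : Set ℕ} {m F : ℕ}

theorem notMem_of_pos_of_lt (hm : HasMultiplicity S m) {n : ℕ} (hn : 0 < n) (hnm : n < m) :
    n ∉ S :=
  fun hnS => (hm.2.2 n hnS hn).not_gt hnm

theorem le_frobenius_add_one (hm : HasMultiplicity S m) (hF : HasFrobenius S F) : m ≤ F + 1 := by
  by_contra! hlt
  exact hm.notMem_of_pos_of_lt F.succ_pos hlt (hF.2 _ F.lt_succ_self)

theorem not_dvd_frobenius (hS : IsNumericalSemigroup S) (hm : HasMultiplicity S m)
    (hF : HasFrobenius S F) : ¬ m ∣ F := by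
  rintro ⟨k, rfl⟩
  exact hF.1 (by simpa [mul_comm] using hS.mul_mem hm.1 k)

theorem two_le (hS : IsNumericalSemigroup S) (hm : HasMultiplicity S m)
    (hF : HasFrobenius S F) : 2 ≤ m := by
  by_contra! hlt
  exact hm.not_dvd_frobenius hS hF (by simp [show m = 1 by linarith [hm.2.1]])

end HasMultiplicity

def multiplesOrAbove (m F : ℕ) : Set ℕ := {n | m ∣ n ∨ F < n}

theorem isNumericalSemigroup_multiplesOrAbove (m F : ℕ) :
    IsNumericalSemigroup (multiplesOrAbove m F) := by
  refine ⟨Or.inl (dvd_zero m), ?_, (Set.finite_Iic F).subset fun n hn => ?_⟩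
  · rintro a (ha | ha) b (hb | hb)
    · exact Or.inl (dvd_add ha hb)
    all_goals exact Or.inr (by omega)
  · simp only [multiplesOrAbove, Set.mem_compl_iff, Set.mem_ofPred_eq, not_or] at hn
    exact Set.mem_Iic.2 (not_lt.1 hn.2)

theorem hasMultiplicity_multiplesOrAbove {m F : ℕ} (hm : 0 < m) (hmF : m ≤ F + 1) :
    HasMultiplicity (multiplesOrAbove m F) m := by
  refine ⟨Or.inl dvd_rfl, hm, ?_⟩
  rintro s (hs | hs) hpos
  · exact Nat.le_of_dvd hpos hs
  · omega

theorem hasFrobenius_multiplesOrAbove {m F : ℕ} (hmF : ¬ m ∣ F) :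
    HasFrobenius (multiplesOrAbove m F) F :=
  ⟨by simp [multiplesOrAbove, hmF], fun _ hx => Or.inr hx⟩

theorem exists_numericalSemigroup_iff (m F : ℕ) :
    (∃ S, IsNumericalSemigroup S ∧ HasMultiplicity S m ∧ HasFrobenius S F) ↔
      2 ≤ m ∧ m ≤ F + 1 ∧ ¬ m ∣ F := by
  constructor
  · rintro ⟨S, hS, hm, hF⟩
    exact ⟨hm.two_le hS hF, hm.le_frobenius_add_one hF, hm.not_dvd_frobenius hS hF⟩
  · rintro ⟨h2, hmF, hdvd⟩
    exact ⟨_, isNumericalSemigroup_multiplesOrAbove m F,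
      hasMultiplicity_multiplesOrAbove (by omega) hmF, hasFrobenius_multiplesOrAbove hdvd⟩

section IntegerVersions

variable {S : Set ℕ}

theorem natCast_mem_image_natCast {n : ℕ} : (n : ℤ) ∈ (Nat.cast '' S : Set ℤ) ↔ n ∈ S :=
  Nat.cast_injective.mem_set_image

theorem hasMultiplicityZ_natCast_iff {m : ℕ} : HasMultiplicityZ S m ↔ HasMultiplicity S m := by
  simp only [HasMultiplicityZ, HasMultiplicity, natCast_mem_image_natCast, Set.forall_mem_image,
    Nat.cast_pos, Nat.cast_le]

theorem hasFrobeniusZ_natCast_iff {F : ℕ} : HasFrobeniusZ S F ↔ HasFrobenius S F := by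
  refine and_congr natCast_mem_image_natCast.not ⟨fun hle x hx => ?_, fun hgt y hy => ?_⟩
  · by_contra hxS
    exact (hle x (natCast_mem_image_natCast.not.2 hxS)).not_gt (by exact_mod_cast hx)
  · rcases lt_or_ge y 0 with hneg | hnonneg
    · omega
    · lift y to ℕ using hnonneg
      by_contra! hlt
      exact hy (natCast_mem_image_natCast.2 (hgt y (by exact_mod_cast hlt)))

theorem HasFrobeniusZ.eq_neg_one_and_univ {F : ℤ} (hF : HasFrobeniusZ S F) (hneg : F < 0) :
    F = -1 ∧ S = Set.univ := by
  have hF1 : F = -1 := le_antisymm (by omega) (hF.2 (-1) fun ⟨n, _, hn⟩ => by omega)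
  refine ⟨hF1, Set.eq_univ_of_forall fun n => ?_⟩
  by_contra hn
  have := hF.2 n (natCast_mem_image_natCast.not.2 hn)
  omega

end IntegerVersions

theorem stmt0 (m F : ℤ) (h : (m, F) ≠ (1, -1)) :
    (∃ S : Set ℕ, IsNumericalSemigroup S ∧ HasMultiplicityZ S m ∧ HasFrobeniusZ S F) ↔
      (F ≥ m - 1 ∧ m - 1 ≥ 1 ∧ ¬ m ∣ F) := by
  constructor
  · rintro ⟨S, hS, hm, hF⟩
    lift m to ℕ using hm.2.1.le
    rw [hasMultiplicityZ_natCast_iff] at hm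
    rcases lt_or_ge F 0 with hneg | hnonneg
    · obtain ⟨rfl, rfl⟩ := hF.eq_neg_one_and_univ hneg
      have : m = 1 := le_antisymm (hm.2.2 1 trivial one_pos) hm.2.1
      exact absurd (by simp [this]) h
    · lift F to ℕ using hnonneg
      rw [hasFrobeniusZ_natCast_iff] at hF
      obtain ⟨h2, hmF, hdvd⟩ := (exists_numericalSemigroup_iff m F).1 ⟨S, hS, hm, hF⟩
      exact ⟨by omega, by omega, by exact_mod_cast hdvd⟩
  · rintro ⟨hFm, hm, hdvd⟩
    lift m to ℕ using by omega
    lift F to ℕ using by omega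
    obtain ⟨S, hS, hmS, hFS⟩ :=
      (exists_numericalSemigroup_iff m F).2 ⟨by omega, by omega, by exact_mod_cast hdvd⟩
    exact ⟨S, hS, hasMultiplicityZ_natCast_iff.2 hmS, hasFrobeniusZ_natCast_iff.2 hFS⟩
end

section
/- If F ≥ m-1 ≥ 1 and m ∤ F, then the set S = ⟨m⟩ ∪ {F+1, F+2, ...} is a numerical semigroup with multiplicity m and Frobenius number F, and it is contained in every numerical semigroup with multiplicity m and Frobenius number F. -/
def IsNumericalSemigroup.toAddSubmonoid {S : Set ℕ} (hS : IsNumericalSemigroup S) :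
    AddSubmonoid ℕ where
  carrier := S
  zero_mem' := hS.1
  add_mem' ha hb := hS.2.1 _ ha _ hb

theorem IsNumericalSemigroup.setOf_dvd_subset {S : Set ℕ} (hS : IsNumericalSemigroup S)
    {m : ℕ} (hm : m ∈ S) : {x | m ∣ x} ⊆ S := by
  rintro _ ⟨k, rfl⟩
  have := hS.toAddSubmonoid.nsmul_mem hm k
  rwa [smul_eq_mul, mul_comm] at this

section MultiplesUnionIoi

variable (m F : ℕ)

theorem isNumericalSemigroup_setOf_dvd_union_lt :
    IsNumericalSemigroup ({x | m ∣ x} ∪ {x | F < x}) := by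
  refine ⟨Or.inl (dvd_zero m), ?_, (Set.finite_Iic F).subset fun x hx => ?_⟩
  · rintro a (ha | ha) b (hb | hb)
    · exact Or.inl (dvd_add ha hb)
    · rcases Nat.eq_zero_or_pos a with rfl | _
      · simpa using Or.inr hb
      · exact Or.inr (by simp only [Set.mem_ofPred_eq] at hb ⊢; omega)
    · rcases Nat.eq_zero_or_pos b with rfl | _
      · simpa using Or.inr ha
      · exact Or.inr (by simp only [Set.mem_ofPred_eq] at ha ⊢; omega)
    · exact Or.inr (by simp only [Set.mem_ofPred_eq] at ha ⊢; omega)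
  · simp only [Set.mem_compl_iff, Set.mem_union, Set.mem_ofPred_eq, not_or, not_lt] at hx
    exact hx.2

variable {m F}

theorem hasMultiplicity_setOf_dvd_union_lt (hm : 0 < m) (hmF : m ≤ F + 1) :
    HasMultiplicity ({x | m ∣ x} ∪ {x | F < x}) m := by
  refine ⟨Or.inl dvd_rfl, hm, ?_⟩
  rintro s (hs | hs) hs0
  · exact Nat.le_of_dvd hs0 hs
  · simp only [Set.mem_ofPred_eq] at hs
    omega

theorem hasFrobenius_setOf_dvd_union_lt (hF : ¬ m ∣ F) :
    HasFrobenius ({x | m ∣ x} ∪ {x | F < x}) F :=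
  ⟨fun h => h.elim hF (lt_irrefl F), fun _ hx => Or.inr hx⟩

theorem setOf_dvd_union_lt_subset {T : Set ℕ} (hT : IsNumericalSemigroup T) (hm : m ∈ T)
    (hF : HasFrobenius T F) : {x | m ∣ x} ∪ {x | F < x} ⊆ T :=
  Set.union_subset (hT.setOf_dvd_subset hm) hF.2

end MultiplesUnionIoi

theorem stmt1 (m F : ℕ) (h1 : (F : ℤ) ≥ (m : ℤ) - 1) (h2 : (m : ℤ) - 1 ≥ 1)
    (h3 : ¬ m ∣ F) :
    IsNumericalSemigroup ({x | m ∣ x} ∪ {x | F < x}) ∧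
    HasMultiplicity ({x | m ∣ x} ∪ {x | F < x}) m ∧
    HasFrobenius ({x | m ∣ x} ∪ {x | F < x}) F ∧
    ∀ T : Set ℕ, IsNumericalSemigroup T → HasMultiplicity T m → HasFrobenius T F →
      ({x | m ∣ x} ∪ {x | F < x}) ⊆ T :=
  ⟨isNumericalSemigroup_setOf_dvd_union_lt m F,
    hasMultiplicity_setOf_dvd_union_lt (by omega) (by omega),
    hasFrobenius_setOf_dvd_union_lt h3,
    fun _ hT hmT hFT => setOf_dvd_union_lt_subset hT hmT.1 hFT⟩
end

section
/- Let m ≥ 2 and m < F < 2m. The numerical semigroups with multiplicity m and Frobenius number F are exactly the sets of the form {0, m} ∪ A ∪ {F+1, F+2, ...} where A is any subset of {m+1, ..., F-1}. -/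
/-!
Since `F < 2 * m`, a sum of two positive elements exceeds `F`, so closure under addition puts
no condition on the elements strictly between `m` and `F`: each of them may be present or not.
-/

theorem isNumericalSemigroup_of_frobenius_lt_two_mul {S : Set ℕ} {m F : ℕ} (h0 : 0 ∈ S)
    (hm : HasMultiplicity S m) (hF : HasFrobenius S F) (hFm : F < 2 * m) :
    IsNumericalSemigroup S := by
  refine ⟨h0, fun a ha b hb => ?_, (Set.finite_Iic F).subset fun x hx => ?_⟩
  · rcases Nat.eq_zero_or_pos a with rfl | ha0
    · simpa using hb
    rcases Nat.eq_zero_or_pos b with rfl | hb0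
    · simpa using ha
    have := hm.2.2 a ha ha0
    have := hm.2.2 b hb hb0
    exact hF.2 _ (by omega)
  · by_contra hxF
    exact hx (hF.2 x (not_le.1 hxF))

theorem eq_union_Icc_of_hasMultiplicity_of_hasFrobenius {S : Set ℕ} {m F : ℕ} (h0 : 0 ∈ S)
    (hm : HasMultiplicity S m) (hF : HasFrobenius S F) :
    S = {0, m} ∪ (S ∩ Set.Icc (m + 1) (F - 1)) ∪ {x | F < x} := by
  ext x
  simp only [Set.mem_union, Set.mem_insert_iff, Set.mem_singleton_iff, Set.mem_ofPred_eq,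
    Set.mem_inter_iff, Set.mem_Icc]
  constructor
  · intro hx
    rcases Nat.eq_zero_or_pos x with rfl | hx0
    · exact Or.inl (Or.inl (Or.inl rfl))
    have hmx := hm.2.2 x hx hx0
    have hxF : x ≠ F := fun h => hF.1 (h ▸ hx)
    rcases hmx.eq_or_lt with rfl | hmx
    · exact Or.inl (Or.inl (Or.inr rfl))
    rcases lt_or_gt_of_ne hxF with hxF | hxF
    · exact Or.inl (Or.inr ⟨hx, by omega, by omega⟩)
    · exact Or.inr hxF
  · rintro (((rfl | rfl) | ⟨hx, -⟩) | hx)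
    · exact h0
    · exact hm.1
    · exact hx
    · exact hF.2 x hx

section Union

variable {m F : ℕ} {A : Set ℕ}

theorem mem_pair_union_union_iff (x : ℕ) :
    x ∈ ({0, m} ∪ A ∪ {x | F < x} : Set ℕ) ↔ x = 0 ∨ x = m ∨ x ∈ A ∨ F < x := by
  simp only [Set.mem_union, Set.mem_insert_iff, Set.mem_singleton_iff, Set.mem_ofPred_eq,
    or_assoc]

theorem hasMultiplicity_union_Icc (hm : 0 < m) (hmF : m ≤ F)
    (hA : A ⊆ Set.Icc (m + 1) (F - 1)) : HasMultiplicity ({0, m} ∪ A ∪ {x | F < x}) m := by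
  refine ⟨(mem_pair_union_union_iff m).2 (Or.inr (Or.inl rfl)), hm, fun s hs hs0 => ?_⟩
  rcases (mem_pair_union_union_iff s).1 hs with rfl | rfl | hsA | hFs
  · exact absurd hs0 (lt_irrefl 0)
  · exact le_rfl
  · exact (Nat.le_succ m).trans (hA hsA).1
  · omega

theorem hasFrobenius_union_Icc (hmF : m < F) (hA : A ⊆ Set.Icc (m + 1) (F - 1)) :
    HasFrobenius ({0, m} ∪ A ∪ {x | F < x}) F := by
  refine ⟨fun hF => ?_, fun x hx => (mem_pair_union_union_iff x).2 (Or.inr (Or.inr (Or.inr hx)))⟩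
  rcases (mem_pair_union_union_iff F).1 hF with rfl | rfl | hFA | hFF
  · exact Nat.not_lt_zero m hmF
  · exact lt_irrefl F hmF
  · have := (hA hFA).2
    omega
  · exact lt_irrefl F hFF

end Union

theorem stmt3_general (m F : ℕ) (h1 : m < F) (h2 : F < 2 * m) (S : Set ℕ) :
    (IsNumericalSemigroup S ∧ HasMultiplicity S m ∧ HasFrobenius S F) ↔
      ∃ A ⊆ Set.Icc (m + 1) (F - 1), S = {0, m} ∪ A ∪ {x | F < x} := by
  constructor
  · rintro ⟨hS, hm, hF⟩
    exact ⟨_, Set.inter_subset_right, eq_union_Icc_of_hasMultiplicity_of_hasFrobenius hS.1 hm hF⟩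
  · rintro ⟨A, hA, rfl⟩
    have hm := hasMultiplicity_union_Icc (by omega) h1.le hA
    have hF := hasFrobenius_union_Icc h1 hA
    exact ⟨isNumericalSemigroup_of_frobenius_lt_two_mul (by simp) hm hF h2, hm, hF⟩

theorem stmt3 (m F : ℕ) (hm : 2 ≤ m) (h1 : m < F) (h2 : F < 2 * m) (S : Set ℕ) :
    (IsNumericalSemigroup S ∧ HasMultiplicity S m ∧ HasFrobenius S F) ↔
      ∃ A ⊆ Set.Icc (m + 1) (F - 1), S = {0, m} ∪ A ∪ {x | F < x} :=
  stmt3_general m F h1 h2 S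
end

section
/- Let S₁ and S₂ be numerical semigroups with the same multiplicity m and the same Frobenius number F, such that {s ∈ S₁ : m < s < F/2} = {s ∈ S₂ : m < s < F/2}. Then S₁ ∪ S₂ is a numerical semigroup with multiplicity m and Frobenius number F. -/
/-!
An element `x ∈ S₁` with `0 < x` and `2x < F` is either `m ∈ S₂` or lies in `θ(S₁) = θ(S₂)`, so
the small elements of the two semigroups coincide. For `x ∈ S₁`, `y ∈ S₂` with `x + y ≤ F`, either
one summand is small, and then `x + y` lies in the semigroup containing the other one, or
`2x, 2y ≥ F`, which forces `x = y` and `F = 2x ∈ S₁`, impossible. Hence `S₁ ∪ S₂` is closed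
under addition; multiplicity and Frobenius number pass to the union directly.
-/

/-- The paper's `θ(S)`, with `s < F/2` written as `2 * s < F` to avoid truncated division. -/
def theta (S : Set ℕ) (m F : ℕ) : Set ℕ :=
  {s ∈ S | m < s ∧ 2 * s < F}

lemma HasMultiplicity.mem_of_theta_eq {S T : Set ℕ} {m F : ℕ} (hS : HasMultiplicity S m)
    (hT : HasMultiplicity T m) (hθ : theta S m F = theta T m F) {x : ℕ} (hx : x ∈ S)
    (hx0 : 0 < x) (hxF : 2 * x < F) : x ∈ T := by
  rcases (hS.2.2 x hx hx0).eq_or_lt with rfl | hmx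
  · exact hT.1
  · have hxθ : x ∈ theta T m F := hθ ▸ ⟨hx, hmx, hxF⟩
    exact hxθ.1

lemma add_mem_union_of_small_mem {S T : Set ℕ} {F : ℕ} (hS : ∀ a ∈ S, ∀ b ∈ S, a + b ∈ S)
    (hT : ∀ a ∈ T, ∀ b ∈ T, a + b ∈ T) (hF : HasFrobenius S F)
    (hST : ∀ x ∈ S, 0 < x → 2 * x < F → x ∈ T) (hTS : ∀ y ∈ T, 0 < y → 2 * y < F → y ∈ S)
    {x y : ℕ} (hx : x ∈ S) (hy : y ∈ T) : x + y ∈ S ∪ T := by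
  by_cases hbig : F < x + y
  · exact Or.inl (hF.2 _ hbig)
  rcases Nat.eq_zero_or_pos x with rfl | hx0
  · exact Or.inr (by simpa using hy)
  rcases Nat.eq_zero_or_pos y with rfl | hy0
  · exact Or.inl (by simpa using hx)
  by_cases hxF : 2 * x < F
  · exact Or.inr (hT x (hST x hx hx0 hxF) y hy)
  by_cases hyF : 2 * y < F
  · exact Or.inl (hS x hx y (hTS y hy hy0 hyF))
  have hFx : F = x + x := by omega
  exact absurd (hFx ▸ hS x hx x hx) hF.1

lemma IsNumericalSemigroup.union {S T : Set ℕ} (hS : IsNumericalSemigroup S)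
    (hT : ∀ a ∈ T, ∀ b ∈ T, a + b ∈ T) (hST : ∀ x ∈ S, ∀ y ∈ T, x + y ∈ S ∪ T) :
    IsNumericalSemigroup (S ∪ T) := by
  refine ⟨Or.inl hS.1, ?_, hS.2.2.subset (Set.compl_subset_compl.mpr Set.subset_union_left)⟩
  rintro a (ha | ha) b (hb | hb)
  · exact Or.inl (hS.2.1 a ha b hb)
  · exact hST a ha b hb
  · exact add_comm a b ▸ hST b hb a ha
  · exact Or.inr (hT a ha b hb)

lemma HasMultiplicity.union {S T : Set ℕ} {m : ℕ} (hS : HasMultiplicity S m)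
    (hT : HasMultiplicity T m) : HasMultiplicity (S ∪ T) m := by
  refine ⟨Or.inl hS.1, hS.2.1, ?_⟩
  rintro s (hs | hs)
  · exact hS.2.2 s hs
  · exact hT.2.2 s hs

lemma HasFrobenius.union {S T : Set ℕ} {F : ℕ} (hS : HasFrobenius S F) (hT : F ∉ T) :
    HasFrobenius (S ∪ T) F :=
  ⟨fun h => h.elim hS.1 hT, fun x hx => Or.inl (hS.2 x hx)⟩

theorem stmt5 (m F : ℕ) (S₁ S₂ : Set ℕ)
    (h₁ : IsNumericalSemigroup S₁) (h₂ : IsNumericalSemigroup S₂)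
    (hm₁ : HasMultiplicity S₁ m) (hm₂ : HasMultiplicity S₂ m)
    (hF₁ : HasFrobenius S₁ F) (hF₂ : HasFrobenius S₂ F)
    (hθ : {s ∈ S₁ | m < s ∧ 2 * s < F} = {s ∈ S₂ | m < s ∧ 2 * s < F}) :
    IsNumericalSemigroup (S₁ ∪ S₂) ∧ HasMultiplicity (S₁ ∪ S₂) m ∧
      HasFrobenius (S₁ ∪ S₂) F := by
  have hθ' : theta S₁ m F = theta S₂ m F := hθ
  have hadd : ∀ x ∈ S₁, ∀ y ∈ S₂, x + y ∈ S₁ ∪ S₂ := fun x hx y hy =>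
    add_mem_union_of_small_mem h₁.2.1 h₂.2.1 hF₁
      (fun _ => hm₁.mem_of_theta_eq hm₂ hθ') (fun _ => hm₂.mem_of_theta_eq hm₁ hθ'.symm) hx hy
  exact ⟨h₁.union h₂.2.1 hadd, hm₁.union hm₂, hF₁.union hF₂.1⟩
end

section
/- Let S₁ and S₂ be numerical semigroups with the same multiplicity m and the same Frobenius number F, such that {s ∈ S₁ : m < s < F/2} = {s ∈ S₂ : m < s < F/2}. Then S₁ ∩ S₂ is a numerical semigroup with multiplicity m and Frobenius number F whose set {s : m < s < F/2} equals that of S₁. -/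
theorem Set.sep_inter_eq_left_of_sep_eq {α : Type*} {s t : Set α} {p : α → Prop}
    (h : {x ∈ s | p x} = {x ∈ t | p x}) : {x ∈ s ∩ t | p x} = {x ∈ s | p x} := by
  refine Set.sep_inter.trans ?_
  rw [← h, Set.inter_self]

theorem IsNumericalSemigroup.inter {S T : Set ℕ} (hS : IsNumericalSemigroup S)
    (hT : IsNumericalSemigroup T) : IsNumericalSemigroup (S ∩ T) := by
  obtain ⟨zero_S, add_S, finite_S⟩ := hS
  obtain ⟨zero_T, add_T, finite_T⟩ := hT
  refine ⟨⟨zero_S, zero_T⟩, fun a ha b hb => ⟨add_S a ha.1 b hb.1, add_T a ha.2 b hb.2⟩, ?_⟩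
  rw [Set.compl_inter]
  exact finite_S.union finite_T

theorem HasMultiplicity.inter {S T : Set ℕ} {m : ℕ} (hS : HasMultiplicity S m) (hmT : m ∈ T) :
    HasMultiplicity (S ∩ T) m :=
  ⟨⟨hS.1, hmT⟩, hS.2.1, fun s hs hs_pos => hS.2.2 s hs.1 hs_pos⟩

theorem HasFrobenius.inter {S T : Set ℕ} {F : ℕ} (hS : HasFrobenius S F)
    (hT : ∀ x, F < x → x ∈ T) : HasFrobenius (S ∩ T) F :=
  ⟨fun hF => hS.1 hF.1, fun x hx => ⟨hS.2 x hx, hT x hx⟩⟩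

theorem stmt6 (m F : ℕ) (S₁ S₂ : Set ℕ)
    (h₁ : IsNumericalSemigroup S₁) (h₂ : IsNumericalSemigroup S₂)
    (hm₁ : HasMultiplicity S₁ m) (hm₂ : HasMultiplicity S₂ m)
    (hF₁ : HasFrobenius S₁ F) (hF₂ : HasFrobenius S₂ F)
    (hθ : {s ∈ S₁ | m < s ∧ 2 * s < F} = {s ∈ S₂ | m < s ∧ 2 * s < F}) :
    IsNumericalSemigroup (S₁ ∩ S₂) ∧ HasMultiplicity (S₁ ∩ S₂) m ∧
      HasFrobenius (S₁ ∩ S₂) F ∧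
      {s ∈ S₁ ∩ S₂ | m < s ∧ 2 * s < F} = {s ∈ S₁ | m < s ∧ 2 * s < F} :=
  ⟨h₁.inter h₂, hm₁.inter hm₂.1, hF₁.inter hF₂.2, Set.sep_inter_eq_left_of_sep_eq hθ⟩
end

section
/- A numerical semigroup S is irreducible if and only if it is maximal (with respect to inclusion) among all numerical semigroups with Frobenius number F(S). -/
/-! Adjoining the Frobenius number `F` to `S` gives a numerical semigroup, since every sum
involving `F` and a positive element exceeds `F`. So if `S ⊊ T` with `F ∉ T`, then
`S = T ∩ insert F S` is a proper decomposition. Conversely, if `S = S₁ ∩ S₂`, then `F` misses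
one of the factors, which then has Frobenius number `F` and properly contains `S`. -/

theorem HasFrobenius.ne_zero {S : Set ℕ} {F : ℕ} (hS : 0 ∈ S) (hF : HasFrobenius S F) :
    F ≠ 0 := by
  rintro rfl
  exact hF.1 hS

theorem HasFrobenius.mono {S T : Set ℕ} {F : ℕ} (hF : HasFrobenius S F) (hST : S ⊆ T)
    (hFT : F ∉ T) : HasFrobenius T F :=
  ⟨hFT, fun x hx => hST (hF.2 x hx)⟩

theorem IsNumericalSemigroup.insert_frobenius {S : Set ℕ} {F : ℕ} (hS : IsNumericalSemigroup S)
    (hF : HasFrobenius S F) : IsNumericalSemigroup (insert F S) := by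
  obtain ⟨h0, hadd, hfin⟩ := hS
  have hFpos : 0 < F := Nat.pos_of_ne_zero (hF.ne_zero h0)
  have hsum : ∀ a ∈ S, a + F ∈ insert F S := by
    intro a ha
    rcases Nat.eq_zero_or_pos a with rfl | ha0
    · simp
    · exact Or.inr (hF.2 _ (by omega))
  refine ⟨Or.inr h0, ?_, hfin.subset (Set.compl_subset_compl.mpr (Set.subset_insert F S))⟩
  rintro a (rfl | ha) b (rfl | hb)
  · exact Or.inr (hF.2 _ (by omega))
  · simpa [add_comm] using hsum b hb
  · exact hsum a ha
  · exact Or.inr (hadd a ha b hb)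

theorem Set.eq_inter_insert_of_subset {α : Type*} {S T : Set α} {a : α} (hST : S ⊆ T)
    (haT : a ∉ T) : S = T ∩ insert a S := by
  ext x
  constructor
  · exact fun hx => ⟨hST hx, Or.inr hx⟩
  · rintro ⟨hxT, rfl | hx⟩
    · exact absurd hxT haT
    · exact hx

theorem stmt7 (S : Set ℕ) (F : ℕ) (hS : IsNumericalSemigroup S)
    (hF : HasFrobenius S F) :
    IsIrreducibleNS S ↔
      ∀ T : Set ℕ, IsNumericalSemigroup T → HasFrobenius T F → S ⊆ T → S = T := by
  constructor
  · rintro ⟨-, hirr⟩ T hT hTF hST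
    by_contra hne
    exact hirr ⟨T, insert F S, hT, hS.insert_frobenius hF, hST.ssubset_of_ne hne,
      Set.ssubset_insert hF.1, Set.eq_inter_insert_of_subset hST hTF.1⟩
  · intro hmax
    refine ⟨hS, ?_⟩
    rintro ⟨S₁, S₂, h₁, h₂, hS₁, hS₂, rfl⟩
    by_cases hF₁ : F ∈ S₁
    · have hF₂ : F ∉ S₂ := fun hF₂ => hF.1 ⟨hF₁, hF₂⟩
      exact hS₂.ne (hmax S₂ h₂ (hF.mono hS₂.subset hF₂) hS₂.subset)
    · exact hS₁.ne (hmax S₁ h₁ (hF.mono hS₁.subset hF₁) hS₁.subset)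
end

section
/- Let S be a numerical semigroup with Frobenius number F ≥ 1 that is not irreducible, and let h = max{x ∈ ℕ \ S : F - x ∉ S and x ≠ F/2}. Then S ∪ {h} is a numerical semigroup with Frobenius number F. -/
section

variable {S : Set ℕ} {F h : ℕ}

theorem HasFrobenius.le_of_notMem (hF : HasFrobenius S F) {x : ℕ} (hx : x ∉ S) : x ≤ F :=
  not_lt.mp fun hlt => hx (hF.2 x hlt)

theorem HasFrobenius.union_singleton (hF : HasFrobenius S F) (hhF : h ≠ F) :
    HasFrobenius (S ∪ {h}) F :=
  ⟨fun hmem => hmem.elim hF.1 fun he => hhF (Set.mem_singleton_iff.mp he).symm,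
    fun x hx => Or.inl (hF.2 x hx)⟩

theorem IsNumericalSemigroup.union_singleton (hS : IsNumericalSemigroup S)
    (hadd : ∀ s ∈ S, 0 < s → h + s ∈ S) (hdouble : h + h ∈ S) :
    IsNumericalSemigroup (S ∪ {h}) := by
  obtain ⟨hzero, hclosed, hfinite⟩ := hS
  have hshift : ∀ s ∈ S, h + s ∈ S ∪ {h} := fun s hs => by
    rcases Nat.eq_zero_or_pos s with rfl | hpos
    · exact Or.inr rfl
    · exact Or.inl (hadd s hs hpos)
  refine ⟨Or.inl hzero, ?_, hfinite.subset (by simp)⟩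
  rintro a (ha | rfl) b (hb | rfl)
  · exact Or.inl (hclosed a ha b hb)
  · exact add_comm a b ▸ hshift a ha
  · exact hshift b hb
  · exact Or.inl hdouble

theorem ne_frobenius_of_sub_notMem (hzero : 0 ∈ S) (hsub : F - h ∉ S) : h ≠ F := by
  rintro rfl
  exact hsub (by simpa using hzero)

theorem frobenius_lt_two_mul_of_max (hF : HasFrobenius S F)
    (hmem : h ∉ S ∧ F - h ∉ S ∧ 2 * h ≠ F)
    (hmax : ∀ x : ℕ, x ∉ S → F - x ∉ S → 2 * x ≠ F → x ≤ h) : F < 2 * h := by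
  have hhF := hF.le_of_notMem hmem.1
  have : F - h ≤ h :=
    hmax _ hmem.2.1 (by rw [Nat.sub_sub_self hhF]; exact hmem.1) (by omega)
  omega

theorem add_mem_of_max (hclosed : ∀ a ∈ S, ∀ b ∈ S, a + b ∈ S) (hF : HasFrobenius S F)
    (hmem : h ∉ S ∧ F - h ∉ S ∧ 2 * h ≠ F)
    (hmax : ∀ x : ℕ, x ∉ S → F - x ∉ S → 2 * x ≠ F → x ≤ h) {s : ℕ} (hs : s ∈ S)
    (hpos : 0 < s) : h + s ∈ S := by
  by_contra hhs
  have hle := hF.le_of_notMem hhs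
  have hpartner : F - (h + s) ∉ S := fun hmem' => hmem.2.1 <| by
    have hsplit : F - h = (F - (h + s)) + s := by omega
    exact hsplit ▸ hclosed _ hmem' _ hs
  have := frobenius_lt_two_mul_of_max hF hmem hmax
  have := hmax _ hhs hpartner (by omega)
  omega

end

theorem stmt8_general (S : Set ℕ) (F h : ℕ) (hS : IsNumericalSemigroup S)
    (hF : HasFrobenius S F)
    (hmem : h ∉ S ∧ F - h ∉ S ∧ 2 * h ≠ F)
    (hmax : ∀ x : ℕ, x ∉ S → F - x ∉ S → 2 * x ≠ F → x ≤ h) :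
    IsNumericalSemigroup (S ∪ {h}) ∧ HasFrobenius (S ∪ {h}) F := by
  have hlt := frobenius_lt_two_mul_of_max hF hmem hmax
  have hdouble : h + h ∈ S := hF.2 _ (by omega)
  have hadd : ∀ s ∈ S, 0 < s → h + s ∈ S := fun _ hs hpos =>
    add_mem_of_max hS.2.1 hF hmem hmax hs hpos
  exact ⟨hS.union_singleton hadd hdouble,
    hF.union_singleton (ne_frobenius_of_sub_notMem hS.1 hmem.2.1)⟩

theorem stmt8 (S : Set ℕ) (F h : ℕ) (hS : IsNumericalSemigroup S)
    (hF : HasFrobenius S F) (hF1 : 1 ≤ F) (hirr : ¬ IsIrreducibleNS S)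
    (hmem : h ∉ S ∧ F - h ∉ S ∧ 2 * h ≠ F)
    (hmax : ∀ x : ℕ, x ∉ S → F - x ∉ S → 2 * x ≠ F → x ≤ h) :
    IsNumericalSemigroup (S ∪ {h}) ∧ HasFrobenius (S ∪ {h}) F :=
  stmt8_general S F h hS hF hmem hmax
end

section
/- A numerical semigroup S with Frobenius number F ≥ 1 is irreducible if and only if the set {x ∈ ℕ \ S : F - x ∉ S and x ≠ F/2} is empty. -/
/-!
Take the largest `x` in the set. Then `F < 2x`, and `a + x ∈ S` for every positive `a ∈ S`:
otherwise `a + x` is a larger gap, so by maximality `F - (a + x) ∈ S`, whence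
`F - x = a + (F - (a + x)) ∈ S`. Hence `S ∪ {x}` and `S ∪ {F}` are numerical semigroups meeting
in `S`. Conversely, if the set is empty, any gap `t` lying in a numerical semigroup `T ⊋ S` yields
`F ∈ T`, either as `t + (F - t)` or as `t + t`; so two such oversemigroups cannot meet in `S`.
-/

namespace IsNumericalSemigroup

variable {S : Set ℕ}

theorem zero_mem (hS : IsNumericalSemigroup S) : 0 ∈ S := hS.1

theorem add_mem (hS : IsNumericalSemigroup S) {a b : ℕ} (ha : a ∈ S) (hb : b ∈ S) :
    a + b ∈ S :=
  hS.2.1 a ha b hb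

theorem finite_compl (hS : IsNumericalSemigroup S) : Sᶜ.Finite := hS.2.2

theorem insert {x : ℕ} (hS : IsNumericalSemigroup S) (hxx : x + x ∈ S)
    (hx : ∀ a ∈ S, a ≠ 0 → a + x ∈ S) : IsNumericalSemigroup (insert x S) := by
  refine ⟨Set.mem_insert_of_mem x hS.zero_mem, ?_,
    hS.finite_compl.subset (Set.compl_subset_compl.mpr (Set.subset_insert x S))⟩
  rintro a (rfl | ha) b (rfl | hb)
  · exact Or.inr hxx
  · obtain rfl | hb0 := eq_or_ne b 0
    · exact Or.inl rfl
    · exact Or.inr (add_comm a b ▸ hx b hb hb0)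
  · obtain rfl | ha0 := eq_or_ne a 0
    · exact Or.inl (zero_add b)
    · exact Or.inr (hx a ha ha0)
  · exact Or.inr (hS.add_mem ha hb)

end IsNumericalSemigroup

namespace HasFrobenius

variable {S : Set ℕ} {F : ℕ}

theorem le_of_notMem_s9 (hF : HasFrobenius S F) {x : ℕ} (hx : x ∉ S) : x ≤ F :=
  not_lt.mp fun h => hx (hF.2 x h)

theorem insert_isNumericalSemigroup (hS : IsNumericalSemigroup S) (hF : HasFrobenius S F) :
    IsNumericalSemigroup (insert F S) := by
  have hF0 : F ≠ 0 := fun h => hF.1 (h ▸ hS.zero_mem)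
  exact hS.insert (hF.2 _ (by omega)) fun a _ ha => hF.2 _ (by omega)

theorem add_mem_of_isMaximalGap (hS : IsNumericalSemigroup S) (hF : HasFrobenius S F)
    {x : ℕ} (hxF : F - x ∉ S) (hmax : ∀ y, y ∉ S → F - y ∉ S → 2 * y ≠ F → y ≤ x)
    (h2x : F < 2 * x) {a : ℕ} (ha : a ∈ S) (ha0 : a ≠ 0) : a + x ∈ S := by
  by_contra hax
  have hle : a + x ≤ F := hF.le_of_notMem_s9 hax
  have hcompl : F - (a + x) ∈ S := by
    by_contra h
    have := hmax (a + x) hax h (by omega)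
    omega
  have hsum : a + (F - (a + x)) = F - x := by omega
  exact hxF (hsum ▸ hS.add_mem ha hcompl)

theorem exists_insert_isNumericalSemigroup (hS : IsNumericalSemigroup S)
    (hF : HasFrobenius S F) (hne : {x : ℕ | x ∉ S ∧ F - x ∉ S ∧ 2 * x ≠ F}.Nonempty) :
    ∃ x ∉ S, x ≠ F ∧ IsNumericalSemigroup (insert x S) := by
  obtain ⟨x, ⟨hxS, hxF, hx2⟩, hmax⟩ := Set.exists_max_image _ id
    (hS.finite_compl.subset fun y hy => hy.1) hne
  have hmax' : ∀ y, y ∉ S → F - y ∉ S → 2 * y ≠ F → y ≤ x :=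
    fun y h₁ h₂ h₃ => hmax y ⟨h₁, h₂, h₃⟩
  have hle : x ≤ F := hF.le_of_notMem_s9 hxS
  have hne : x ≠ F := fun h => hxF (by rw [h, Nat.sub_self]; exact hS.zero_mem)
  have hFx : F - x ≤ x := hmax' _ hxF (by rwa [Nat.sub_sub_self hle]) (by omega)
  have h2x : F < 2 * x := by omega
  exact ⟨x, hxS, hne, hS.insert (hF.2 _ (by omega))
    fun a ha ha0 => hF.add_mem_of_isMaximalGap hS hxF hmax' h2x ha ha0⟩

theorem mem_of_ssubset (hF : HasFrobenius S F)
    (hsymm : ∀ x, x ∉ S → F - x ∉ S → 2 * x = F) {T : Set ℕ}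
    (hT : IsNumericalSemigroup T) (hST : S ⊂ T) : F ∈ T := by
  obtain ⟨t, htT, htS⟩ := Set.exists_of_ssubset hST
  by_cases hFt : F - t ∈ S
  · simpa [Nat.add_sub_cancel' (hF.le_of_notMem_s9 htS)] using hT.add_mem htT (hST.1 hFt)
  · simpa [← hsymm t htS hFt, two_mul] using hT.add_mem htT htT

end HasFrobenius

theorem stmt9_general (S : Set ℕ) (F : ℕ) (hS : IsNumericalSemigroup S)
    (hF : HasFrobenius S F) :
    IsIrreducibleNS S ↔ {x : ℕ | x ∉ S ∧ F - x ∉ S ∧ 2 * x ≠ F} = ∅ := by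
  constructor
  · rintro ⟨-, hirr⟩
    by_contra hne
    obtain ⟨x, hxS, hxF, hSx⟩ :=
      hF.exists_insert_isNumericalSemigroup hS (Set.nonempty_iff_ne_empty.mpr hne)
    refine hirr ⟨insert x S, insert F S, hSx, hF.insert_isNumericalSemigroup hS,
      Set.ssubset_insert hxS, Set.ssubset_insert hF.1, ?_⟩
    have hFx : F ∉ insert x S := by simp [hxF.symm, hF.1]
    rw [Set.inter_insert_of_notMem hFx, Set.insert_inter_of_notMem hxS, Set.inter_self]
  · intro hempty
    have hsymm : ∀ x, x ∉ S → F - x ∉ S → 2 * x = F := fun x h₁ h₂ => by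
      by_contra h₃
      exact (Set.eq_empty_iff_forall_notMem.mp hempty) x ⟨h₁, h₂, h₃⟩
    refine ⟨hS, fun ⟨S₁, S₂, hS₁, hS₂, h₁, h₂, hS₁₂⟩ => hF.1 ?_⟩
    exact hS₁₂ ▸ ⟨hF.mem_of_ssubset hsymm hS₁ h₁, hF.mem_of_ssubset hsymm hS₂ h₂⟩

theorem stmt9 (S : Set ℕ) (F : ℕ) (hS : IsNumericalSemigroup S)
    (hF : HasFrobenius S F) (hF1 : 1 ≤ F) :
    IsIrreducibleNS S ↔ {x : ℕ | x ∉ S ∧ F - x ∉ S ∧ 2 * x ≠ F} = ∅ :=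
  stmt9_general S F hS hF
end

section
/- Let S be a numerical semigroup with Frobenius number F ≥ 1. Then S ∪ {x ∈ ℕ \ S : F - x ∉ S and x > F/2} is an irreducible numerical semigroup with Frobenius number F. -/
/-!
Adjoin to `S` every gap `x > F/2` whose partner `F - x` is also a gap. The result `T` is still
closed under addition: a sum of two adjoined gaps exceeds `F`, and if `s + x ∉ S` with `s ∈ S`
then `F - (s + x) ∈ S` would give `F - x ∈ S`. Moreover `F - x ∈ T` for every gap `x < F` of `T`
with `2 * x ≠ F`, so any semigroup strictly containing `T` contains `F`. Hence `T` is maximal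
among numerical semigroups avoiding `F`, and such a semigroup cannot be the intersection of two
strictly larger ones: one of them would have to avoid `F`.
-/

theorem IsIrreducibleNS.of_maximal_not_mem {T : Set ℕ} {F : ℕ} (hT : IsNumericalSemigroup T)
    (hFT : F ∉ T)
    (hmax : ∀ T₁, IsNumericalSemigroup T₁ → T ⊆ T₁ → F ∉ T₁ → T₁ ⊆ T) :
    IsIrreducibleNS T := by
  refine ⟨hT, ?_⟩
  rintro ⟨S₁, S₂, h₁, h₂, ⟨sub₁, ne₁⟩, ⟨sub₂, ne₂⟩, rfl⟩
  by_cases hF₁ : F ∈ S₁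
  · exact ne₂ (hmax S₂ h₂ sub₂ fun hF₂ => hFT ⟨hF₁, hF₂⟩)
  · exact ne₁ (hmax S₁ h₁ sub₁ hF₁)

def frobeniusCompletion (S : Set ℕ) (F : ℕ) : Set ℕ :=
  S ∪ {x : ℕ | x ∉ S ∧ F - x ∉ S ∧ 2 * x > F}

namespace frobeniusCompletion

variable {S : Set ℕ} {F : ℕ}

theorem subset : S ⊆ frobeniusCompletion S F := Set.subset_union_left

theorem add_mem_of_mem_of_gap (hadd : ∀ a ∈ S, ∀ b ∈ S, a + b ∈ S) (hF : HasFrobenius S F)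
    {s x : ℕ} (hs : s ∈ S) (hx : F - x ∉ S) (hx2 : 2 * x > F) :
    s + x ∈ frobeniusCompletion S F := by
  by_cases hsx : s + x ∈ S
  · exact Or.inl hsx
  refine Or.inr ⟨hsx, fun hc => hx ?_, by omega⟩
  have hle : s + x ≤ F := by
    by_contra h
    exact hsx (hF.2 _ (by omega))
  have e : F - (s + x) + s = F - x := by omega
  simpa only [e] using hadd _ hc s hs

theorem add_mem (hadd : ∀ a ∈ S, ∀ b ∈ S, a + b ∈ S) (hF : HasFrobenius S F)
    {a b : ℕ} (ha : a ∈ frobeniusCompletion S F) (hb : b ∈ frobeniusCompletion S F) :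
    a + b ∈ frobeniusCompletion S F := by
  rcases ha with ha | ⟨-, haF, ha2⟩ <;> rcases hb with hb | ⟨-, hbF, hb2⟩
  · exact Or.inl (hadd a ha b hb)
  · exact add_mem_of_mem_of_gap hadd hF ha hbF hb2
  · rw [add_comm]
    exact add_mem_of_mem_of_gap hadd hF hb haF ha2
  · exact Or.inl (hF.2 _ (by omega))

theorem isNumericalSemigroup (hS : IsNumericalSemigroup S) (hF : HasFrobenius S F) :
    IsNumericalSemigroup (frobeniusCompletion S F) :=
  ⟨subset hS.1, fun _ ha _ hb => add_mem hS.2.1 hF ha hb,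
    hS.2.2.subset (Set.compl_subset_compl.mpr subset)⟩

theorem hasFrobenius (h0 : 0 ∈ S) (hF : HasFrobenius S F) :
    HasFrobenius (frobeniusCompletion S F) F := by
  refine ⟨?_, fun x hx => subset (hF.2 x hx)⟩
  rintro (h | ⟨-, hF0, -⟩)
  · exact hF.1 h
  · exact hF0 (by simpa only [Nat.sub_self] using h0)

theorem sub_mem_of_not_mem {x : ℕ}
    (hx : x ∉ frobeniusCompletion S F) (hxF : x ≤ F) (hx2 : 2 * x ≠ F) :
    F - x ∈ frobeniusCompletion S F := by
  have hxS : x ∉ S := fun h => hx (subset h)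
  by_cases hFx : F - x ∈ S
  · exact subset hFx
  have hlt : 2 * x < F := by
    by_contra h
    exact hx (Or.inr ⟨hxS, hFx, by omega⟩)
  refine Or.inr ⟨hFx, ?_, by omega⟩
  rwa [Nat.sub_sub_self hxF]

theorem subset_of_not_mem (hF : HasFrobenius S F) {T₁ : Set ℕ}
    (hadd : ∀ a ∈ T₁, ∀ b ∈ T₁, a + b ∈ T₁) (hsub : frobeniusCompletion S F ⊆ T₁)
    (hFT₁ : F ∉ T₁) : T₁ ⊆ frobeniusCompletion S F := by
  intro x hx
  by_contra hxT
  have hxF : x ≤ F := by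
    by_contra h
    exact hxT (subset (hF.2 x (by omega)))
  by_cases hx2 : 2 * x = F
  · exact hFT₁ (by simpa only [← two_mul, hx2] using hadd x hx x hx)
  · have hmem := hadd x hx _ (hsub (sub_mem_of_not_mem hxT hxF hx2))
    exact hFT₁ (by rwa [Nat.add_sub_cancel' hxF] at hmem)

theorem isIrreducibleNS (hS : IsNumericalSemigroup S) (hF : HasFrobenius S F) :
    IsIrreducibleNS (frobeniusCompletion S F) :=
  .of_maximal_not_mem (isNumericalSemigroup hS hF) (hasFrobenius hS.1 hF).1
    fun _ hT₁ hsub hFT₁ => subset_of_not_mem hF hT₁.2.1 hsub hFT₁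

end frobeniusCompletion

theorem stmt10_general (S : Set ℕ) (F : ℕ) (hS : IsNumericalSemigroup S)
    (hF : HasFrobenius S F) :
    IsIrreducibleNS (S ∪ {x : ℕ | x ∉ S ∧ F - x ∉ S ∧ 2 * x > F}) ∧
      HasFrobenius (S ∪ {x : ℕ | x ∉ S ∧ F - x ∉ S ∧ 2 * x > F}) F :=
  ⟨frobeniusCompletion.isIrreducibleNS hS hF, frobeniusCompletion.hasFrobenius hS.1 hF⟩

theorem stmt10 (S : Set ℕ) (F : ℕ) (hS : IsNumericalSemigroup S)
    (hF : HasFrobenius S F) (hF1 : 1 ≤ F) :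
    IsIrreducibleNS (S ∪ {x : ℕ | x ∉ S ∧ F - x ∉ S ∧ 2 * x > F}) ∧
      HasFrobenius (S ∪ {x : ℕ | x ∉ S ∧ F - x ∉ S ∧ 2 * x > F}) F :=
  stmt10_general S F hS hF
end

section
/- Let F be odd, F ≥ 3, and let m satisfy 3 ≤ m ≤ (F+2)/2 with m ∤ F. Let r with 1 ≤ r ≤ m be congruent to (F+1)/2 modulo m. Then the submonoid generated by {m} ∪ {(F+1)/2 + x : x ∈ {0,...,m-1} \ {m-r, r-1}} is a symmetric (irreducible) numerical semigroup with multiplicity m, Frobenius number F, and its ratio exceeds F/2. -/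
/-!
Write `c = (F + 1) / 2`. The closure is the explicit set `largeRatioSemigroup m F` of the
multiples of `m`, the `n ≥ c` outside the residue class of `F` modulo `m`, and the `n > F`:
the admitted generators `c + x` cover every residue class except those of `0` (`x = m - r`)
and of `F` (`x = r - 1`), while the class of `F` above `F` is reached by sums of two generators.
In this description, two elements that are at least `c` add up to more than `F`, so `F` is a gap;
a gap `x` satisfies `x ≡ F` or `x < c`, and either way `F - x` lies in the semigroup, which gives
symmetry and hence irreducibility; every element not divisible by `m` is at least `c > F / 2`.
-/

section Residues

variable {m c r x : ℕ}

theorem dvd_add_iff_eq_sub (hrc : c ≡ r [MOD m]) (hr1 : 1 ≤ r) (hr2 : r ≤ m) (hx : x < m) :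
    m ∣ c + x ↔ x = m - r := by
  have hzero : r + (m - r) ≡ 0 [MOD m] := by
    rw [Nat.add_sub_cancel' hr2]
    exact Nat.modEq_zero_iff_dvd.2 dvd_rfl
  rw [← Nat.modEq_zero_iff_dvd]
  calc c + x ≡ 0 [MOD m] ↔ c + x ≡ r + (m - r) [MOD m] :=
        ⟨fun h => h.trans hzero.symm, fun h => h.trans hzero⟩
    _ ↔ x ≡ m - r [MOD m] := hrc.add_iff_left
    _ ↔ x = m - r := ⟨fun h => h.eq_of_lt_of_lt hx (by omega), fun h => h ▸ rfl⟩

theorem add_modEq_iff_eq_pred {F : ℕ} (hc : F + 1 = c + c) (hrc : c ≡ r [MOD m]) (hr1 : 1 ≤ r)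
    (hr2 : r ≤ m) (hx : x < m) :
    c + x ≡ F [MOD m] ↔ x = r - 1 := by
  calc c + x ≡ F [MOD m] ↔ c + (x + 1) ≡ c + c [MOD m] := by
        rw [← hc, ← add_assoc]; exact (Nat.ModEq.add_iff_right rfl).symm
    _ ↔ x + 1 ≡ r - 1 + 1 [MOD m] := by
        rw [Nat.sub_add_cancel hr1, Nat.ModEq.add_iff_left rfl]
        exact ⟨fun h => h.trans hrc, fun h => h.trans hrc.symm⟩
    _ ↔ x ≡ r - 1 [MOD m] := Nat.ModEq.add_iff_right rfl
    _ ↔ x = r - 1 := ⟨fun h => h.eq_of_lt_of_lt hx (by omega), fun h => h ▸ rfl⟩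

end Residues

theorem IsIrreducibleNS.of_symmetric {S : Set ℕ} {F : ℕ} (hS : IsNumericalSemigroup S)
    (hF : HasFrobenius S F) (hsym : ∀ x ∉ S, F - x ∈ S) : IsIrreducibleNS S := by
  have frobenius_mem : ∀ S' : Set ℕ, IsNumericalSemigroup S' → S ⊂ S' → F ∈ S' := by
    rintro S' hS' ⟨hsub, hne⟩
    obtain ⟨x, hxS', hxS⟩ := Set.not_subset.1 hne
    have hxF : x ≤ F := by
      by_contra! h
      exact hxS (hF.2 x h)
    simpa [Nat.add_sub_cancel' hxF] using hS'.2.1 x hxS' (F - x) (hsub (hsym x hxS))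
  refine ⟨hS, ?_⟩
  rintro ⟨S₁, S₂, hS₁, hS₂, hsub₁, hsub₂, rfl⟩
  exact hF.1 ⟨frobenius_mem S₁ hS₁ hsub₁, frobenius_mem S₂ hS₂ hsub₂⟩

def largeRatioSemigroup (m F : ℕ) : Set ℕ :=
  {n | m ∣ n ∨ ((F + 1) / 2 ≤ n ∧ ¬ n ≡ F [MOD m]) ∨ F < n}

namespace largeRatioSemigroup

variable {m F : ℕ}

theorem add_mem (hF : Odd F) {a b : ℕ} (ha : a ∈ largeRatioSemigroup m F)
    (hb : b ∈ largeRatioSemigroup m F) : a + b ∈ largeRatioSemigroup m F := by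
  obtain ⟨t, rfl⟩ := hF
  rcases ha with ha | ha | ha
  · rcases hb with hb | hb | hb
    · exact Or.inl (dvd_add ha hb)
    · refine Or.inr (Or.inl ⟨by omega, fun h => hb.2 ?_⟩)
      simpa using ((Nat.modEq_zero_iff_dvd.2 ha).add_right b).symm.trans h
    · exact Or.inr (Or.inr (by omega))
  · rcases hb with hb | hb | hb
    · refine Or.inr (Or.inl ⟨by omega, fun h => ha.2 ?_⟩)
      simpa using ((Nat.modEq_zero_iff_dvd.2 hb).add_left a).symm.trans h
    all_goals exact Or.inr (Or.inr (by omega))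
  · exact Or.inr (Or.inr (by omega))

theorem isNumericalSemigroup (hF : Odd F) : IsNumericalSemigroup (largeRatioSemigroup m F) := by
  refine ⟨Or.inl (dvd_zero m), fun a ha b hb => add_mem hF ha hb, ?_⟩
  refine (Set.finite_Iic F).subset fun n hn => ?_
  by_contra h
  exact hn (Or.inr (Or.inr (not_le.1 h)))

theorem hasMultiplicity (hm : 0 < m) (hmF : m ≤ (F + 1) / 2) :
    HasMultiplicity (largeRatioSemigroup m F) m := by
  refine ⟨Or.inl dvd_rfl, hm, fun s hs hs0 => ?_⟩
  rcases hs with h | h | h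
  · exact Nat.le_of_dvd hs0 h
  all_goals omega

theorem hasFrobenius (hdvd : ¬ m ∣ F) : HasFrobenius (largeRatioSemigroup m F) F := by
  refine ⟨?_, fun x hx => Or.inr (Or.inr hx)⟩
  rintro (h | h | h)
  · exact hdvd h
  · exact h.2 rfl
  · exact lt_irrefl F h

theorem sub_mem_of_notMem (hF : Odd F) {x : ℕ} (hx : x ∉ largeRatioSemigroup m F) :
    F - x ∈ largeRatioSemigroup m F := by
  simp only [largeRatioSemigroup, Set.mem_ofPred_eq, not_or, not_and_or, not_not, not_lt] at hx
  obtain ⟨hxm, hxc | hxF, hxF'⟩ := hx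
  · obtain ⟨t, rfl⟩ := hF
    refine Or.inr (Or.inl ⟨by omega, fun h => hxm ?_⟩)
    simpa [Nat.sub_sub_self hxF'] using (Nat.modEq_iff_dvd' (Nat.sub_le _ x)).1 h
  · exact Or.inl ((Nat.modEq_iff_dvd' hxF').1 hxF)

theorem lt_two_mul (hF : Odd F) {ρ : ℕ} (hρ : ρ ∈ largeRatioSemigroup m F) (hρm : ¬ m ∣ ρ) :
    F < 2 * ρ := by
  obtain ⟨t, rfl⟩ := hF
  rcases hρ with h | h | h
  · exact absurd h hρm
  all_goals omega

end largeRatioSemigroup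

def largeRatioGenerators (m F r : ℕ) : Set ℕ :=
  {m} ∪ (fun x => (F + 1) / 2 + x) '' ({x : ℕ | x < m} \ {m - r, r - 1})

namespace largeRatioGenerators

variable {m F r : ℕ}

theorem mul_mem_closure (k : ℕ) : m * k ∈ AddSubmonoid.closure (largeRatioGenerators m F r) := by
  have hm : m ∈ AddSubmonoid.closure (largeRatioGenerators m F r) :=
    AddSubmonoid.subset_closure (Or.inl rfl)
  simpa [mul_comm] using (AddSubmonoid.closure _).nsmul_mem hm k

theorem add_mem_closure {x : ℕ} (hx : x < m) (hxm : x ≠ m - r) (hxr : x ≠ r - 1) :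
    (F + 1) / 2 + x ∈ AddSubmonoid.closure (largeRatioGenerators m F r) :=
  AddSubmonoid.subset_closure (Or.inr ⟨x, ⟨hx, by simp [hxm, hxr]⟩, rfl⟩)

theorem mem_closure_of_le (hF : Odd F) (hr1 : 1 ≤ r) (hr2 : r ≤ m)
    (hrc : (F + 1) / 2 ≡ r [MOD m]) {n : ℕ} (hn : (F + 1) / 2 ≤ n) (hnm : ¬ m ∣ n)
    (hnF : ¬ n ≡ F [MOD m]) : n ∈ AddSubmonoid.closure (largeRatioGenerators m F r) := by
  have hc : F + 1 = (F + 1) / 2 + (F + 1) / 2 := by obtain ⟨t, rfl⟩ := hF; omega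
  obtain ⟨x, k, hx, rfl⟩ : ∃ x k, x < m ∧ n = (F + 1) / 2 + x + m * k :=
    ⟨(n - (F + 1) / 2) % m, (n - (F + 1) / 2) / m, Nat.mod_lt _ (by omega),
      by have := Nat.mod_add_div (n - (F + 1) / 2) m; omega⟩
  rw [Nat.dvd_add_left (dvd_mul_right m k), dvd_add_iff_eq_sub hrc hr1 hr2 hx] at hnm
  rw [Nat.add_modulus_mul_modEq_iff, add_modEq_iff_eq_pred hc hrc hr1 hr2 hx] at hnF
  exact AddSubmonoid.add_mem _ (add_mem_closure hx hnm hnF) (mul_mem_closure k)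

theorem mem_closure_of_modEq (hF : Odd F) (hm : 3 ≤ m) (hr1 : 1 ≤ r) (hr2 : r ≤ m) {n : ℕ}
    (hn : F < n) (hnF : n ≡ F [MOD m]) :
    n ∈ AddSubmonoid.closure (largeRatioGenerators m F r) := by
  obtain ⟨k, hk⟩ := (Nat.modEq_iff_dvd' hn.le).1 hnF.symm
  obtain _ | k := k
  · omega
  -- The two excluded offsets add up to `m - 1`, so `a` and `m - 1 - a` are excluded together.
  obtain ⟨a, ha, ham, har⟩ : ∃ a < 3, a ≠ m - r ∧ a ≠ r - 1 := by
    by_contra! h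
    have := h 0; have := h 1; have := h 2
    omega
  have hn' : n = ((F + 1) / 2 + a) + ((F + 1) / 2 + (m - 1 - a)) + m * k := by
    obtain ⟨t, rfl⟩ := hF
    rw [mul_add_one] at hk
    omega
  rw [hn']
  refine AddSubmonoid.add_mem _ (AddSubmonoid.add_mem _ ?_ ?_) (mul_mem_closure k)
  · exact add_mem_closure (by omega) ham har
  · exact add_mem_closure (by omega) (by omega) (by omega)

theorem closure_eq (hF : Odd F) (hm : 3 ≤ m) (hr1 : 1 ≤ r) (hr2 : r ≤ m)
    (hrc : (F + 1) / 2 ≡ r [MOD m]) :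
    (AddSubmonoid.closure (largeRatioGenerators m F r) : Set ℕ) = largeRatioSemigroup m F := by
  apply subset_antisymm
  · refine fun n hn => AddSubmonoid.closure_induction ?_ (Or.inl (dvd_zero m))
      (fun _ _ _ _ ha hb => largeRatioSemigroup.add_mem hF ha hb) hn
    rintro _ (rfl | ⟨x, ⟨hx, hxr⟩, rfl⟩)
    · exact Or.inl dvd_rfl
    · have hc : F + 1 = (F + 1) / 2 + (F + 1) / 2 := by obtain ⟨t, rfl⟩ := hF; omega
      refine Or.inr (Or.inl ⟨Nat.le_add_right _ x, ?_⟩)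
      rw [add_modEq_iff_eq_pred hc hrc hr1 hr2 hx]
      exact fun h => hxr (Or.inr h)
  · intro n hn
    by_cases hnm : m ∣ n
    · obtain ⟨k, rfl⟩ := hnm
      exact mul_mem_closure k
    by_cases hnF : n ≡ F [MOD m]
    · refine mem_closure_of_modEq hF hm hr1 hr2 ?_ hnF
      rcases hn with h | h | h
      exacts [absurd h hnm, absurd hnF h.2, h]
    · refine mem_closure_of_le hF hr1 hr2 hrc ?_ hnm hnF
      rcases hn with h | h | h
      exacts [absurd h hnm, h.1, by omega]

end largeRatioGenerators

theorem stmt14_general (m F r : ℕ) (hodd : Odd F) (hm : 3 ≤ m)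
    (hm2 : 2 * m ≤ F + 2) (hdvd : ¬ m ∣ F)
    (hr1 : 1 ≤ r) (hr2 : r ≤ m) (hrc : (F + 1) / 2 ≡ r [MOD m]) :
    ∀ S : Set ℕ,
      S = ↑(AddSubmonoid.closure
        ({m} ∪ (fun x => (F + 1) / 2 + x) '' ({x : ℕ | x < m} \ {m - r, r - 1}))) →
      IsNumericalSemigroup S ∧ HasMultiplicity S m ∧ HasFrobenius S F ∧
        IsIrreducibleNS S ∧ (∀ x : ℕ, x ∉ S → F - x ∈ S) ∧
        ∀ ρ : ℕ, ρ ∈ S → ¬ m ∣ ρ → (∀ s ∈ S, ¬ m ∣ s → ρ ≤ s) → 2 * ρ > F := by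
  intro S hS
  obtain rfl : S = largeRatioSemigroup m F :=
    hS.trans (largeRatioGenerators.closure_eq hodd hm hr1 hr2 hrc)
  have hmc : m ≤ (F + 1) / 2 := by obtain ⟨t, rfl⟩ := hodd; omega
  have hS := largeRatioSemigroup.isNumericalSemigroup (m := m) hodd
  have hFrob := largeRatioSemigroup.hasFrobenius hdvd
  have hsym (x : ℕ) := largeRatioSemigroup.sub_mem_of_notMem (m := m) hodd (x := x)
  exact ⟨hS, largeRatioSemigroup.hasMultiplicity (by omega) hmc, hFrob,
    .of_symmetric hS hFrob hsym, hsym,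
    fun ρ hρ hρm _ => largeRatioSemigroup.lt_two_mul hodd hρ hρm⟩

theorem stmt14 (m F r : ℕ) (hodd : Odd F) (hF : 3 ≤ F) (hm : 3 ≤ m)
    (hm2 : 2 * m ≤ F + 2) (hdvd : ¬ m ∣ F)
    (hr1 : 1 ≤ r) (hr2 : r ≤ m) (hrc : (F + 1) / 2 ≡ r [MOD m]) :
    ∀ S : Set ℕ,
      S = ↑(AddSubmonoid.closure
        ({m} ∪ (fun x => (F + 1) / 2 + x) '' ({x : ℕ | x < m} \ {m - r, r - 1}))) →
      IsNumericalSemigroup S ∧ HasMultiplicity S m ∧ HasFrobenius S F ∧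
        IsIrreducibleNS S ∧ (∀ x : ℕ, x ∉ S → F - x ∈ S) ∧
        ∀ ρ : ℕ, ρ ∈ S → ¬ m ∣ ρ → (∀ s ∈ S, ¬ m ∣ s → ρ ≤ s) → 2 * ρ > F :=
  stmt14_general m F r hodd hm hm2 hdvd hr1 hr2 hrc
end
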